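/- Let I be an instance of SPA-ST and let J be the integer programming model of I. Then I admits a super-stable matching if and only if J admits a feasible solution (an assignment of values in {0,1} to all the variables satisfying all twelve constraint families). -/

import Mathlib

open scoped Classical

/-- An instance of the Student-Project Allocation problem with lecturer
preferences over students, with Ties (SPA-ST).  `sPref s p q` means student `s`
ranks project `p` at least as highly as project `q` (`p ⪰_s q`); `lPref k t t'`
means lecturer `k` ranks student `t` at least as highly as student `t'`. -/
structure SPAST (S P L : Type) [Fintype S] [Fintype P] [Fintype L]
    [DecidableEq S] [DecidableEq P] [DecidableEq L] where
  /-- the lecturer offering each project -/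
  lec : P → L
  /-- project capacities -/
  c : P → ℕ
  /-- lecturer capacities -/
  d : L → ℕ
  cpos : ∀ p : P, 0 < c p
  dpos : ∀ k : L, 0 < d k
  /-- the set of projects acceptable to each student -/
  acc : S → Finset P
  sPref : S → P → P → Prop
  lPref : L → S → S → Prop
  sRefl : ∀ s : S, ∀ p ∈ acc s, sPref s p p
  sTrans : ∀ s : S, ∀ p ∈ acc s, ∀ q ∈ acc s, ∀ r ∈ acc s,
    sPref s p q → sPref s q r → sPref s p r
  sTotal : ∀ s : S, ∀ p ∈ acc s, ∀ q ∈ acc s, sPref s p q ∨ sPref s q p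
  lRefl : ∀ k : L, ∀ t : S, (∃ p ∈ acc t, lec p = k) → lPref k t t
  lTrans : ∀ k : L, ∀ t1 t2 t3 : S,
    (∃ p ∈ acc t1, lec p = k) → (∃ p ∈ acc t2, lec p = k) → (∃ p ∈ acc t3, lec p = k) →
    lPref k t1 t2 → lPref k t2 t3 → lPref k t1 t3
  lTotal : ∀ k : L, ∀ t1 t2 : S,
    (∃ p ∈ acc t1, lec p = k) → (∃ p ∈ acc t2, lec p = k) →
    lPref k t1 t2 ∨ lPref k t2 t1
  capLB : ∀ p : P, c p ≤ d (lec p)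
  capUB : ∀ k : L, d k ≤ ∑ p ∈ Finset.univ.filter (fun p => lec p = k), c p

namespace SPAST

variable {S P L : Type} [Fintype S] [Fintype P] [Fintype L]
  [DecidableEq S] [DecidableEq P] [DecidableEq L]

/-- `M` is a matching: pairs are acceptable, each student is matched at most once,
and project and lecturer capacities are respected. -/
def IsMatching (I : SPAST S P L) (M : Finset (S × P)) : Prop :=
  (∀ x ∈ M, x.2 ∈ I.acc x.1) ∧
  (∀ s : S, ∀ p q : P, (s, p) ∈ M → (s, q) ∈ M → p = q) ∧
  (∀ p : P, (M.filter (fun x => x.2 = p)).card ≤ I.c p) ∧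
  (∀ k : L, (M.filter (fun x => I.lec x.2 = k)).card ≤ I.d k)

/-- The set `M(p)` of students assigned to project `p` in `M`. -/
def projAsg (M : Finset (S × P)) (p : P) : Finset S :=
  (M.filter (fun x => x.2 = p)).image Prod.fst

/-- The set `M(l_k)` of students assigned to lecturer `k` in `M`. -/
def lecAsg (I : SPAST S P L) (M : Finset (S × P)) (k : L) : Finset S :=
  (M.filter (fun x => I.lec x.2 = k)).image Prod.fst

/-- `t` is a least-preferred (worst) student of lecturer `k` in the set `T`. -/
def WorstIn (I : SPAST S P L) (k : L) (T : Finset S) (t : S) : Prop :=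
  t ∈ T ∧ ∀ t' ∈ T, I.lPref k t' t

/-- `(s, p)` is a super-blocking pair for `M`. -/
def SuperBlocking (I : SPAST S P L) (M : Finset (S × P)) (s : S) (p : P) : Prop :=
  p ∈ I.acc s ∧ (s, p) ∉ M ∧
  (∀ q : P, (s, q) ∈ M → ¬(I.sPref s q p ∧ ¬I.sPref s p q)) ∧
  (((projAsg M p).card < I.c p ∧ (lecAsg I M (I.lec p)).card < I.d (I.lec p)) ∨
   ((projAsg M p).card < I.c p ∧ (lecAsg I M (I.lec p)).card = I.d (I.lec p) ∧
     (s ∈ lecAsg I M (I.lec p) ∨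
      ∃ t : S, WorstIn I (I.lec p) (lecAsg I M (I.lec p)) t ∧ I.lPref (I.lec p) s t)) ∨
   ((projAsg M p).card = I.c p ∧
     ∃ t : S, WorstIn I (I.lec p) (projAsg M p) t ∧ I.lPref (I.lec p) s t))

/-- `(s, p)` is a weakly-blocking pair for `M`. -/
def WeakBlocking (I : SPAST S P L) (M : Finset (S × P)) (s : S) (p : P) : Prop :=
  p ∈ I.acc s ∧ (s, p) ∉ M ∧
  (∀ q : P, (s, q) ∈ M → I.sPref s p q ∧ ¬I.sPref s q p) ∧
  (((projAsg M p).card < I.c p ∧ (lecAsg I M (I.lec p)).card < I.d (I.lec p)) ∨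
   ((projAsg M p).card < I.c p ∧ (lecAsg I M (I.lec p)).card = I.d (I.lec p) ∧
     (s ∈ lecAsg I M (I.lec p) ∨
      ∃ t : S, WorstIn I (I.lec p) (lecAsg I M (I.lec p)) t ∧
        (I.lPref (I.lec p) s t ∧ ¬I.lPref (I.lec p) t s))) ∨
   ((projAsg M p).card = I.c p ∧
     ∃ t : S, WorstIn I (I.lec p) (projAsg M p) t ∧
       (I.lPref (I.lec p) s t ∧ ¬I.lPref (I.lec p) t s)))

/-- `M` is a super-stable matching in `I`. -/
def SuperStable (I : SPAST S P L) (M : Finset (S × P)) : Prop :=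
  I.IsMatching M ∧ ∀ (s : S) (p : P), ¬SuperBlocking I M s p

/-- `M` is a weakly stable matching in `I`. -/
def WeaklyStable (I : SPAST S P L) (M : Finset (S × P)) : Prop :=
  I.IsMatching M ∧ ∀ (s : S) (p : P), ¬WeakBlocking I M s p

/-- `I` is an SPA-S instance: all preference lists are strictly ordered
(the preorders are antisymmetric). -/
def StrictPrefs (I : SPAST S P L) : Prop :=
  (∀ s : S, ∀ p ∈ I.acc s, ∀ q ∈ I.acc s, I.sPref s p q → I.sPref s q p → p = q) ∧
  (∀ k : L, ∀ t t' : S, (∃ p ∈ I.acc t, I.lec p = k) → (∃ p ∈ I.acc t', I.lec p = k) →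
    I.lPref k t t' → I.lPref k t' t → t = t')

/-- `I'` is an SPA-S instance obtained from `I` by breaking the ties. -/
def TieBreaking (I I' : SPAST S P L) : Prop :=
  I'.lec = I.lec ∧ I'.c = I.c ∧ I'.d = I.d ∧ I'.acc = I.acc ∧
  StrictPrefs I' ∧
  (∀ (s : S) (p q : P), I.sPref s p q → ¬I.sPref s q p →
    I'.sPref s p q ∧ ¬I'.sPref s q p) ∧
  (∀ (k : L) (t t' : S), I.lPref k t t' → ¬I.lPref k t' t →
    I'.lPref k t t' ∧ ¬I'.lPref k t' t)

end SPAST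

namespace SPAST

variable {S P L : Type} [Fintype S] [Fintype P] [Fintype L]
  [DecidableEq S] [DecidableEq P] [DecidableEq L]

/-- The variables of the integer programming model `J` of an SPA-ST instance. -/
structure IPSol (S P L : Type) where
  x : S → P → ℤ
  alpha : P → ℤ
  beta : L → ℤ
  eta : L → ℤ
  delta : S → L → ℤ
  gamma : P → ℤ
  lam : S → P → ℤ

/-- a value in {0,1} -/
def Bin (v : ℤ) : Prop := v = 0 ∨ v = 1

/-- θ_{i,j} = 1 − x_{i,j} − Σ_{p' ∈ S_{i,j}} x_{i,p'}, where
`S_{i,j}` is the set of projects `s` strictly prefers to `p`. -/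
noncomputable def theta (I : SPAST S P L) (sol : IPSol S P L) (s : S) (p : P) : ℤ :=
  1 - sol.x s p -
    ∑ p' ∈ (I.acc s).filter (fun p' => I.sPref s p' p ∧ ¬I.sPref s p p'), sol.x s p'

/-- `sol` is a feasible solution of the IP model `J` of `I`: all variables take
values in {0,1} and the twelve constraint families hold. -/
def Feasible (I : SPAST S P L) (sol : IPSol S P L) : Prop :=
  -- binary variables
  (∀ (s : S) (p : P), Bin (sol.x s p)) ∧
  (∀ p : P, Bin (sol.alpha p)) ∧
  (∀ k : L, Bin (sol.beta k)) ∧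
  (∀ k : L, Bin (sol.eta k)) ∧
  (∀ (s : S) (k : L), Bin (sol.delta s k)) ∧
  (∀ p : P, Bin (sol.gamma p)) ∧
  (∀ (s : S), ∀ p ∈ I.acc s, Bin (sol.lam s p)) ∧
  -- x variables exist only for acceptable pairs
  (∀ (s : S) (p : P), p ∉ I.acc s → sol.x s p = 0) ∧
  -- (1)
  (∀ s : S, ∑ p ∈ I.acc s, sol.x s p ≤ 1) ∧
  -- (2)
  (∀ p : P, ∑ s : S, sol.x s p ≤ (I.c p : ℤ)) ∧
  -- (3)
  (∀ k : L, ∑ s : S, ∑ p ∈ Finset.univ.filter (fun p => I.lec p = k), sol.x s p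
    ≤ (I.d k : ℤ)) ∧
  -- (4)
  (∀ p : P, (I.c p : ℤ) * sol.alpha p ≥ (I.c p : ℤ) - ∑ s : S, sol.x s p) ∧
  -- (5)
  (∀ k : L, (I.d k : ℤ) * sol.beta k ≥
    (I.d k : ℤ) - ∑ s : S, ∑ p ∈ Finset.univ.filter (fun p => I.lec p = k), sol.x s p) ∧
  -- (6)
  (∀ (s : S), ∀ p ∈ I.acc s,
    theta I sol s p + sol.alpha p + sol.beta (I.lec p) ≤ 2) ∧
  -- (7)
  (∀ k : L, (I.d k : ℤ) * sol.eta k ≥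
    1 + (∑ s : S, ∑ p ∈ Finset.univ.filter (fun p => I.lec p = k), sol.x s p)
      - (I.d k : ℤ)) ∧
  -- (8)
  (∀ (s : S) (k : L), (I.d k : ℤ) * sol.delta s k ≥
    (∑ s' : S, ∑ p ∈ Finset.univ.filter (fun p => I.lec p = k), sol.x s' p) -
    ∑ s' ∈ Finset.univ.filter (fun s' : S =>
        (∃ q ∈ I.acc s', I.lec q = k) ∧ I.lPref k s' s ∧ ¬I.lPref k s s'),
      ∑ p ∈ Finset.univ.filter (fun p => I.lec p = k), sol.x s' p) ∧
  -- (9)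
  (∀ (s : S), ∀ p ∈ I.acc s,
    theta I sol s p + sol.alpha p + sol.eta (I.lec p) + sol.delta s (I.lec p) ≤ 3) ∧
  -- (10)
  (∀ p : P, (I.c p : ℤ) * sol.gamma p ≥ 1 + (∑ s : S, sol.x s p) - (I.c p : ℤ)) ∧
  -- (11)
  (∀ (s : S), ∀ p ∈ I.acc s, (I.c p : ℤ) * sol.lam s p ≥
    (∑ s' : S, sol.x s' p) -
    ∑ s' ∈ Finset.univ.filter (fun s' : S =>
        p ∈ I.acc s' ∧ I.lPref (I.lec p) s' s ∧ ¬I.lPref (I.lec p) s s'),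
      sol.x s' p) ∧
  -- (12)
  (∀ (s : S), ∀ p ∈ I.acc s,
    theta I sol s p + sol.gamma p + sol.lam s p ≤ 2)

/-- The matching `{(s_i, p_j) : x_{i,j} = 1}` derived from an IP solution. -/
def matchOf (sol : IPSol S P L) : Finset (S × P) :=
  Finset.univ.filter (fun y : S × P => sol.x y.1 y.2 = 1)

end SPAST


/-!
A super-stable matching `M` yields the solution in which `x` is the incidence vector of `M` and
each auxiliary variable is the indicator of the condition that its big-M constraint detects:
`α_j` that `p_j` is undersubscribed, `β_k` / `η_k` that `l_k` is undersubscribed / full, `γ_j`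
that `p_j` is full, and `δ_{i,k}` / `λ_{i,j,k}` that some student of `M(l_k)` / `M(p_j)` is not
strictly preferred to `s_i`. Conversely, for binary `x` satisfying (1)–(3) the big-M constraints
force each auxiliary variable to be `1` whenever its condition holds, and `θ_{i,j} = 1` says
exactly that `s_i` would accept `p_j`; so (6), (9), (12) exclude super-blocking pairs of types
(i), (ii), (iii). Since `⪰_{l_k}` is a total preorder, "`l_k` ranks `s` at least as highly as a
worst student of `T`" is the same as "some student of `T` is not strictly preferred to `s`",
which is how the existential conditions of the definition become counting conditions.
-/

open Finset

theorem Finset.Nonempty.exists_forall_rel_of_total {α : Type*} {r : α → α → Prop} {T : Finset α}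
    (hT : T.Nonempty) (htotal : ∀ a ∈ T, ∀ b ∈ T, r a b ∨ r b a)
    (htrans : ∀ a ∈ T, ∀ b ∈ T, ∀ c ∈ T, r a b → r b c → r a c) :
    ∃ w ∈ T, ∀ t ∈ T, r t w := by
  induction hT using Finset.Nonempty.cons_induction with
  | singleton a =>
    refine ⟨a, mem_singleton_self a, fun t ht => ?_⟩
    rw [mem_singleton.1 ht]
    exact (htotal a (mem_singleton_self a) a (mem_singleton_self a)).elim id id
  | cons a T ha hT ih =>
    have hTa : T ⊆ T.cons a ha := subset_cons ha
    have haT : a ∈ T.cons a ha := mem_cons_self a T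
    obtain ⟨w, hw, hwT⟩ := ih (fun x hx y hy => htotal x (hTa hx) y (hTa hy))
      fun x hx y hy z hz => htrans x (hTa hx) y (hTa hy) z (hTa hz)
    by_cases haw : r a w
    · exact ⟨w, hTa hw, by simpa [haw] using hwT⟩
    · have hwa : r w a := (htotal a haT w (hTa hw)).resolve_left haw
      refine ⟨a, haT, ?_⟩
      simp only [mem_cons, forall_eq_or_imp]
      exact ⟨(htotal a haT a haT).elim id id,
        fun t ht => htrans t (hTa ht) w (hTa hw) a haT (hwT t ht) hwa⟩

theorem Finset.sum_boole_sub_sum_filter_and {α : Type*} [Fintype α] [DecidableEq α] (A : Finset α)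
    (Q R : α → Prop) [DecidablePred Q] [DecidablePred R] (hQ : ∀ t ∈ A, Q t) :
    ∑ t, (if t ∈ A then (1 : ℤ) else 0) -
        ∑ t ∈ univ.filter (fun t => Q t ∧ R t), (if t ∈ A then (1 : ℤ) else 0) =
      #(A.filter fun t => ¬R t) := by
  rw [← sum_filter_add_sum_filter_not univ (fun t => Q t ∧ R t), add_sub_cancel_left, sum_boole]
  congr 2
  ext t
  simp only [mem_filter, mem_univ, true_and]
  exact ⟨fun ⟨hQR, ht⟩ => ⟨ht, fun hR => hQR ⟨hQ t ht, hR⟩⟩,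
    fun ⟨ht, hR⟩ => ⟨fun hQR => hR hQR.2, ht⟩⟩

namespace SPAST

lemma x_eq_ite_mem_matchOf {S P L : Type} [Fintype S] [Fintype P] [DecidableEq S]
    [DecidableEq P] {sol : IPSol S P L} (hbin : ∀ s p, Bin (sol.x s p)) (s : S) (p : P) :
    sol.x s p = if (s, p) ∈ matchOf sol then 1 else 0 := by
  rcases hbin s p with h | h <;> simp [matchOf, h]

section Projects

variable {S P : Type} [DecidableEq S] [DecidableEq P] {M : Finset (S × P)}

lemma mem_projAsg {p : P} {t : S} : t ∈ projAsg M p ↔ (t, p) ∈ M := by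
  simp [projAsg]

lemma card_projAsg (p : P) : #(projAsg M p) = #(M.filter fun x => x.2 = p) := by
  refine card_image_of_injOn fun x hx y hy hxy => Prod.ext hxy ?_
  rw [(mem_filter.1 hx).2, (mem_filter.1 hy).2]

lemma sum_x_eq_card_projAsg [Fintype S] {L : Type} {sol : IPSol S P L}
    (hx : ∀ s p, sol.x s p = if (s, p) ∈ M then 1 else 0) (p : P) :
    ∑ s, sol.x s p = #(projAsg M p) := by
  simp [hx, ← mem_projAsg]

end Projects

variable {S P L : Type} [Fintype S] [Fintype P] [Fintype L]
  [DecidableEq S] [DecidableEq P] [DecidableEq L]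

lemma bin_ite (c : Prop) [Decidable c] : Bin (if c then 1 else 0) := by
  unfold Bin; split_ifs <;> simp

lemma Bin.eq_one_of_le_mul {v a N : ℤ} (hv : Bin v) (h : a ≤ N * v) (ha : 0 < a) : v = 1 := by
  rcases hv with rfl | rfl
  · omega
  · rfl

lemma le_mul_ite {a N : ℤ} {c : Prop} [Decidable c] (hN : a ≤ N) (h : 0 < a → c) :
    a ≤ N * if c then 1 else 0 := by
  split_ifs with hc
  · omega
  · have := mt h hc
    omega

lemma add_ite_add_ite_le_two {θ : ℤ} {c₁ c₂ : Prop} [Decidable c₁] [Decidable c₂] (hθ : θ ≤ 1)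
    (h : θ = 1 → c₁ → c₂ → False) :
    θ + (if c₁ then 1 else 0) + (if c₂ then 1 else 0) ≤ 2 := by
  by_cases hθ1 : θ = 1
  · split_ifs with h₁ h₂
    exacts [(h hθ1 h₁ h₂).elim, by omega, by omega, by omega]
  · split_ifs <;> omega

lemma add_ite_add_ite_add_ite_le_three {θ : ℤ} {c₁ c₂ c₃ : Prop} [Decidable c₁] [Decidable c₂]
    [Decidable c₃] (hθ : θ ≤ 1) (h : θ = 1 → c₁ → c₂ → c₃ → False) :
    θ + (if c₁ then 1 else 0) + (if c₂ then 1 else 0) + (if c₃ then 1 else 0) ≤ 3 := by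
  by_cases hθ1 : θ = 1
  · split_ifs with h₁ h₂ h₃
    exacts [(h hθ1 h₁ h₂ h₃).elim, by omega, by omega, by omega, by omega, by omega, by omega,
      by omega]
  · split_ifs <;> omega

section Preferences

variable (I : SPAST S P L)

lemma exists_worstIn {k : L} {T : Finset S} (hT : T.Nonempty)
    (hranked : ∀ t ∈ T, ∃ q ∈ I.acc t, I.lec q = k) : ∃ t, I.WorstIn k T t := by
  obtain ⟨w, hw, hwT⟩ := hT.exists_forall_rel_of_total (r := I.lPref k)
    (fun a ha b hb => I.lTotal k a b (hranked a ha) (hranked b hb))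
    fun a ha b hb c hc => I.lTrans k a b c (hranked a ha) (hranked b hb) (hranked c hc)
  exact ⟨w, hw, hwT⟩

lemma exists_worstIn_lPref_iff {k : L} {T : Finset S} {s : S} (hs : ∃ q ∈ I.acc s, I.lec q = k)
    (hranked : ∀ t ∈ T, ∃ q ∈ I.acc t, I.lec q = k) :
    (∃ t, I.WorstIn k T t ∧ I.lPref k s t) ↔ ∃ t ∈ T, ¬(I.lPref k t s ∧ ¬I.lPref k s t) := by
  constructor
  · rintro ⟨t, ⟨ht, -⟩, hst⟩
    exact ⟨t, ht, fun h => h.2 hst⟩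
  · rintro ⟨t, ht, hts⟩
    have hst : I.lPref k s t := by
      rcases I.lTotal k s t hs (hranked t ht) with h | h <;> tauto
    obtain ⟨w, hw⟩ := I.exists_worstIn ⟨t, ht⟩ hranked
    exact ⟨w, hw, I.lTrans k s t w hs (hranked t ht) (hranked w hw.1) hst (hw.2 t ht)⟩

lemma mem_or_exists_worstIn_lPref_iff {k : L} {T : Finset S} {s : S}
    (hs : ∃ q ∈ I.acc s, I.lec q = k) (hranked : ∀ t ∈ T, ∃ q ∈ I.acc t, I.lec q = k) :
    (s ∈ T ∨ ∃ t, I.WorstIn k T t ∧ I.lPref k s t) ↔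
      ∃ t ∈ T, ¬(I.lPref k t s ∧ ¬I.lPref k s t) := by
  rw [I.exists_worstIn_lPref_iff hs hranked, or_iff_right_iff_imp]
  exact fun hsT => ⟨s, hsT, fun h => h.2 h.1⟩

end Preferences

section Assignment

variable {I : SPAST S P L} {M : Finset (S × P)}

lemma mem_lecAsg {k : L} {t : S} : t ∈ lecAsg I M k ↔ ∃ q, (t, q) ∈ M ∧ I.lec q = k := by
  simp [lecAsg]

lemma card_lecAsg (hu : ∀ s : S, ∀ p q : P, (s, p) ∈ M → (s, q) ∈ M → p = q) (k : L) :
    #(lecAsg I M k) = #(M.filter fun x => I.lec x.2 = k) :=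
  card_image_of_injOn fun x hx y hy hxy =>
    Prod.ext hxy (hu x.1 x.2 y.2 (mem_filter.1 hx).1 (hxy ▸ (mem_filter.1 hy).1))

lemma ranked_of_mem_projAsg (hacc : ∀ x ∈ M, x.2 ∈ I.acc x.1) {p : P} {t : S}
    (ht : t ∈ projAsg M p) : ∃ q ∈ I.acc t, I.lec q = I.lec p :=
  ⟨p, hacc _ (mem_projAsg.1 ht), rfl⟩

lemma ranked_of_mem_lecAsg (hacc : ∀ x ∈ M, x.2 ∈ I.acc x.1) {k : L} {t : S}
    (ht : t ∈ lecAsg I M k) : ∃ q ∈ I.acc t, I.lec q = k := by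
  obtain ⟨q, hq, rfl⟩ := mem_lecAsg.1 ht
  exact ⟨q, hacc _ hq, rfl⟩

end Assignment

section IncidenceVector

variable {I : SPAST S P L} {M : Finset (S × P)} {sol : IPSol S P L}

lemma sum_lec_x_eq_ite (hx : ∀ s p, sol.x s p = if (s, p) ∈ M then 1 else 0)
    (hu : ∀ s : S, ∀ p q : P, (s, p) ∈ M → (s, q) ∈ M → p = q) (s : S) (k : L) :
    ∑ p ∈ univ.filter (fun p => I.lec p = k), sol.x s p = if s ∈ lecAsg I M k then 1 else 0 := by
  split_ifs with hs
  · obtain ⟨q, hq, rfl⟩ := mem_lecAsg.1 hs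
    rw [sum_eq_single_of_mem q (by simp), hx, if_pos hq]
    intro p _ hpq
    rw [hx, if_neg fun hp => hpq (hu s p q hp hq)]
  · refine sum_eq_zero fun p hp => ?_
    rw [hx, if_neg fun hsp => hs (mem_lecAsg.2 ⟨p, hsp, (mem_filter.1 hp).2⟩)]

lemma sum_lec_x_eq_card_lecAsg (hx : ∀ s p, sol.x s p = if (s, p) ∈ M then 1 else 0)
    (hu : ∀ s : S, ∀ p q : P, (s, p) ∈ M → (s, q) ∈ M → p = q) (k : L) :
    ∑ s, ∑ p ∈ univ.filter (fun p => I.lec p = k), sol.x s p = #(lecAsg I M k) := by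
  simp [sum_lec_x_eq_ite hx hu]

lemma sum_acc_x_le_one_iff (hx : ∀ s p, sol.x s p = if (s, p) ∈ M then 1 else 0)
    (hacc : ∀ x ∈ M, x.2 ∈ I.acc x.1) (s : S) :
    ∑ p ∈ I.acc s, sol.x s p ≤ 1 ↔ ∀ p q : P, (s, p) ∈ M → (s, q) ∈ M → p = q := by
  simp only [hx, sum_boole, Nat.cast_le_one, card_le_one, mem_filter]
  exact ⟨fun h p q hp hq => h p ⟨hacc _ hp, hp⟩ q ⟨hacc _ hq, hq⟩,
    fun h p hp q hq => h p q hp.2 hq.2⟩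

lemma sum_x_sub_sum_better_eq_card (hx : ∀ s p, sol.x s p = if (s, p) ∈ M then 1 else 0)
    (hacc : ∀ x ∈ M, x.2 ∈ I.acc x.1) (s : S) (p : P) :
    (∑ s', sol.x s' p) - ∑ s' ∈ univ.filter (fun s' : S =>
        p ∈ I.acc s' ∧ I.lPref (I.lec p) s' s ∧ ¬I.lPref (I.lec p) s s'), sol.x s' p =
      #((projAsg M p).filter fun t => ¬(I.lPref (I.lec p) t s ∧ ¬I.lPref (I.lec p) s t)) := by
  simp only [hx, ← mem_projAsg]
  apply sum_boole_sub_sum_filter_and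
  exact fun t ht => hacc _ (mem_projAsg.1 ht)

lemma sum_lec_x_sub_sum_better_eq_card (hx : ∀ s p, sol.x s p = if (s, p) ∈ M then 1 else 0)
    (hacc : ∀ x ∈ M, x.2 ∈ I.acc x.1)
    (hu : ∀ s : S, ∀ p q : P, (s, p) ∈ M → (s, q) ∈ M → p = q) (s : S) (k : L) :
    (∑ s', ∑ p ∈ univ.filter (fun p => I.lec p = k), sol.x s' p) -
      ∑ s' ∈ univ.filter (fun s' : S =>
        (∃ q ∈ I.acc s', I.lec q = k) ∧ I.lPref k s' s ∧ ¬I.lPref k s s'),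
        ∑ p ∈ univ.filter (fun p => I.lec p = k), sol.x s' p =
      #((lecAsg I M k).filter fun t => ¬(I.lPref k t s ∧ ¬I.lPref k s t)) := by
  simp only [sum_lec_x_eq_ite hx hu]
  apply sum_boole_sub_sum_filter_and
  exact fun t ht => ranked_of_mem_lecAsg hacc ht

lemma theta_le_one (hx : ∀ s p, sol.x s p = if (s, p) ∈ M then 1 else 0) (s : S) (p : P) :
    theta I sol s p ≤ 1 := by
  simp only [theta, hx, sum_boole]
  split_ifs <;> omega

lemma theta_eq_one_iff (hx : ∀ s p, sol.x s p = if (s, p) ∈ M then 1 else 0)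
    (hacc : ∀ x ∈ M, x.2 ∈ I.acc x.1) (s : S) (p : P) :
    theta I sol s p = 1 ↔
      (s, p) ∉ M ∧ ∀ q, (s, q) ∈ M → ¬(I.sPref s q p ∧ ¬I.sPref s p q) := by
  have hcard : #(((I.acc s).filter fun q => I.sPref s q p ∧ ¬I.sPref s p q).filter
      fun q => (s, q) ∈ M) = 0 ↔ ∀ q, (s, q) ∈ M → ¬(I.sPref s q p ∧ ¬I.sPref s p q) := by
    simp only [card_eq_zero, filter_eq_empty_iff, mem_filter]
    exact ⟨fun h q hq hpref => h ⟨hacc _ hq, hpref⟩ hq, fun h q hq hqM => h q hqM hq.2⟩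
  simp only [theta, hx, sum_boole, ← hcard]
  split_ifs with hm <;> simp [hm]
  omega

lemma superBlocking_iff (hx : ∀ s p, sol.x s p = if (s, p) ∈ M then 1 else 0)
    (hacc : ∀ x ∈ M, x.2 ∈ I.acc x.1) (s : S) (p : P) :
    SuperBlocking I M s p ↔ p ∈ I.acc s ∧ theta I sol s p = 1 ∧
      ((#(projAsg M p) < I.c p ∧ #(lecAsg I M (I.lec p)) < I.d (I.lec p)) ∨
       (#(projAsg M p) < I.c p ∧ #(lecAsg I M (I.lec p)) = I.d (I.lec p) ∧
         ∃ t ∈ lecAsg I M (I.lec p), ¬(I.lPref (I.lec p) t s ∧ ¬I.lPref (I.lec p) s t)) ∨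
       (#(projAsg M p) = I.c p ∧
         ∃ t ∈ projAsg M p, ¬(I.lPref (I.lec p) t s ∧ ¬I.lPref (I.lec p) s t))) := by
  simp only [SuperBlocking, theta_eq_one_iff hx hacc, and_assoc]
  refine and_congr_right fun hp => ?_
  rw [I.mem_or_exists_worstIn_lPref_iff ⟨p, hp, rfl⟩ fun t => ranked_of_mem_lecAsg hacc,
    I.exists_worstIn_lPref_iff ⟨p, hp, rfl⟩ fun t => ranked_of_mem_projAsg hacc]

end IncidenceVector

section FromSolution

variable {I : SPAST S P L} {sol : IPSol S P L}

lemma isMatching_matchOf (h : Feasible I sol) : I.IsMatching (matchOf sol) := by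
  obtain ⟨hbin, -, -, -, -, -, -, hx0, h1, h2, h3, -⟩ := h
  have hx := x_eq_ite_mem_matchOf hbin
  have hacc : ∀ x ∈ matchOf sol, x.2 ∈ I.acc x.1 := fun x hxM => by
    by_contra hn
    simp [matchOf, hx0 x.1 x.2 hn] at hxM
  have hu := fun s => (sum_acc_x_le_one_iff hx hacc s).1 (h1 s)
  refine ⟨hacc, hu, fun p => ?_, fun k => ?_⟩
  · have := h2 p
    rw [sum_x_eq_card_projAsg hx, card_projAsg] at this
    exact_mod_cast this
  · have := h3 k
    rw [sum_lec_x_eq_card_lecAsg hx hu, card_lecAsg hu] at this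
    exact_mod_cast this

lemma not_superBlocking_matchOf (h : Feasible I sol) (s : S) (p : P) :
    ¬SuperBlocking I (matchOf sol) s p := by
  have hM := isMatching_matchOf h
  obtain ⟨hbin, hbα, hbβ, hbη, hbδ, hbγ, hbl, -, -, -, -, h4, h5, h6, h7, h8, h9, h10, h11,
    h12⟩ := h
  have hx := x_eq_ite_mem_matchOf hbin
  rw [superBlocking_iff hx hM.1]
  rintro ⟨hp, hθ, ⟨hpc, hkc⟩ | ⟨hpc, hkc, t, ht, hts⟩ | ⟨hpc, t, ht, hts⟩⟩
  all_goals
    have hsumP := sum_x_eq_card_projAsg hx p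
    have hsumK := sum_lec_x_eq_card_lecAsg (I := I) hx hM.2.1 (I.lec p)
  · have hα := (hbα p).eq_one_of_le_mul (h4 p) (by omega)
    have hβ := (hbβ (I.lec p)).eq_one_of_le_mul (h5 (I.lec p)) (by omega)
    have := h6 s p hp
    omega
  · have hα := (hbα p).eq_one_of_le_mul (h4 p) (by omega)
    have hη := (hbη (I.lec p)).eq_one_of_le_mul (h7 (I.lec p)) (by omega)
    have hsumBetter := sum_lec_x_sub_sum_better_eq_card hx hM.1 hM.2.1 s (I.lec p)
    have hδ := (hbδ s (I.lec p)).eq_one_of_le_mul (h8 s (I.lec p)) (by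
      rw [hsumBetter, Nat.cast_pos]
      exact card_pos.2 ⟨t, mem_filter.2 ⟨ht, hts⟩⟩)
    have := h9 s p hp
    omega
  · have hγ := (hbγ p).eq_one_of_le_mul (h10 p) (by omega)
    have hl := (hbl s p hp).eq_one_of_le_mul (h11 s p hp) (by
      rw [sum_x_sub_sum_better_eq_card hx hM.1, Nat.cast_pos]
      exact card_pos.2 ⟨t, mem_filter.2 ⟨ht, hts⟩⟩)
    have := h12 s p hp
    omega

end FromSolution

noncomputable def solOfMatching (I : SPAST S P L) (M : Finset (S × P)) : IPSol S P L where
  x s p := if (s, p) ∈ M then 1 else 0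
  alpha p := if #(projAsg M p) < I.c p then 1 else 0
  beta k := if #(lecAsg I M k) < I.d k then 1 else 0
  eta k := if #(lecAsg I M k) = I.d k then 1 else 0
  delta s k := if ∃ t ∈ lecAsg I M k, ¬(I.lPref k t s ∧ ¬I.lPref k s t) then 1 else 0
  gamma p := if #(projAsg M p) = I.c p then 1 else 0
  lam s p :=
    if ∃ t ∈ projAsg M p, ¬(I.lPref (I.lec p) t s ∧ ¬I.lPref (I.lec p) s t) then 1 else 0

lemma feasible_solOfMatching {I : SPAST S P L} {M : Finset (S × P)} (hM : SuperStable I M) :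
    Feasible I (solOfMatching I M) := by
  obtain ⟨⟨hacc, hu, hcapP, hcapK⟩, hstable⟩ := hM
  have hx : ∀ s p, (solOfMatching I M).x s p = if (s, p) ∈ M then 1 else 0 := fun _ _ => rfl
  have hsumP := sum_x_eq_card_projAsg hx
  have hsumK := sum_lec_x_eq_card_lecAsg (I := I) hx hu
  have hblock := fun s p => mt (superBlocking_iff hx hacc s p).2 (hstable s p)
  refine ⟨fun _ _ => bin_ite _, fun _ => bin_ite _, fun _ => bin_ite _, fun _ => bin_ite _,
    fun _ _ => bin_ite _, fun _ => bin_ite _, fun _ _ _ => bin_ite _,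
    fun s p hp => if_neg fun hsp => hp (hacc _ hsp),
    fun s => (sum_acc_x_le_one_iff hx hacc s).2 (hu s),
    fun p => ?_, fun k => ?_, fun p => ?_, fun k => ?_, fun s p hp => ?_, fun k => ?_,
    fun s k => ?_, fun s p hp => ?_, fun p => ?_, fun s p hp => ?_, fun s p hp => ?_⟩
  · rw [hsumP, card_projAsg]; exact_mod_cast hcapP p
  · rw [hsumK, card_lecAsg hu]; exact_mod_cast hcapK k
  · exact le_mul_ite (by rw [hsumP]; omega) fun h => by rw [hsumP] at h; omega
  · exact le_mul_ite (by rw [hsumK]; omega) fun h => by rw [hsumK] at h; omega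
  · exact add_ite_add_ite_le_two (theta_le_one hx s p) fun hθ hα hβ =>
      hblock s p ⟨hp, hθ, Or.inl ⟨hα, hβ⟩⟩
  · have hk := hcapK k
    rw [← card_lecAsg hu] at hk
    exact le_mul_ite (by have := I.dpos k; rw [hsumK]; omega) fun h => by rw [hsumK] at h; omega
  · rw [sum_lec_x_sub_sum_better_eq_card hx hacc hu]
    refine le_mul_ite ?_ fun h => filter_nonempty_iff.1 (card_pos.1 (by exact_mod_cast h))
    exact_mod_cast (card_filter_le _ _).trans ((card_lecAsg hu k).trans_le (hcapK k))
  · exact add_ite_add_ite_add_ite_le_three (theta_le_one hx s p) fun hθ hα hη hδ =>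
      hblock s p ⟨hp, hθ, Or.inr (Or.inl ⟨hα, hη, hδ⟩)⟩
  · have hp := hcapP p
    rw [← card_projAsg] at hp
    exact le_mul_ite (by have := I.cpos p; rw [hsumP]; omega) fun h => by rw [hsumP] at h; omega
  · rw [sum_x_sub_sum_better_eq_card hx hacc]
    refine le_mul_ite ?_ fun h => filter_nonempty_iff.1 (card_pos.1 (by exact_mod_cast h))
    exact_mod_cast (card_filter_le _ _).trans ((card_projAsg p).trans_le (hcapP p))
  · exact add_ite_add_ite_le_two (theta_le_one hx s p) fun hθ hγ hl =>
      hblock s p ⟨hp, hθ, Or.inr (Or.inr ⟨hγ, hl⟩)⟩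

end SPAST

open SPAST in
theorem super_stable_exists_iff_feasible_exists {S P L : Type} [Fintype S] [Fintype P] [Fintype L]
    [DecidableEq S] [DecidableEq P] [DecidableEq L]
    (I : SPAST S P L) :
    (∃ M : Finset (S × P), SuperStable I M) ↔
      (∃ sol : IPSol S P L, Feasible I sol) :=
  ⟨fun ⟨M, hM⟩ => ⟨solOfMatching I M, feasible_solOfMatching hM⟩,
    fun ⟨sol, hsol⟩ => ⟨matchOf sol, isMatching_matchOf hsol, not_superBlocking_matchOf hsol⟩⟩
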